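/- Monadic substitution principle: if Δ; Γ ⊢ c ÷ A and Δ, x : A; Γ ⊢ c′ ÷ B, then Δ; Γ ⊢ ⟨c/x⟩c′ ÷ B. -/
import Mathlib


/-!
ECMTT (Effectful Contextual Modal Type Theory), Zyuzin & Nanevski.

De Bruijn representation with two separate variable namespaces:
* Δ-indices for value variables `x : A` and modal variables `u :: A[Ψ]`
  (both live in the modal context Δ; index 0 is the most recently bound).
* Γ-indices for operations `op ÷ A ⇒ B` and continuations `k ∼: A @ S ⇒ B`
  (both live in the effect context Γ; index 0 is the most recently bound).
An algebraic theory Ψ is a list of operation signatures (input, output).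
-/

inductive Ty : Type where
  | base : ℕ → Ty
  | unit : Ty
  | arrow : Ty → Ty → Ty
  | box : List (Ty × Ty) → Ty → Ty

/-- Algebraic theory: list of operation signatures `A ⇒ B`. -/
abbrev Theory := List (Ty × Ty)

/-- Modal-context hypotheses: value variables and modal variables. -/
inductive DHyp : Type where
  | val : Ty → DHyp
  | modal : Ty → Theory → DHyp

/-- Effect-context hypotheses: operations and continuations. -/
inductive GHyp : Type where
  | op : Ty → Ty → GHyp
  | cont : Ty → Ty → Ty → GHyp   -- `k ∼: A @ S ⇒ B`

abbrev DCtx := List DHyp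
abbrev GCtx := List GHyp

/-- An algebraic theory viewed as an effect context (operations only). -/
def thCtx (Ψ : Theory) : GCtx := Ψ.map fun p => GHyp.op p.1 p.2

mutual
  /-- Expressions. -/
  inductive Expr : Type where
    | var : ℕ → Expr                      -- value variable (Δ-index)
    | unit : Expr                         -- the value () of the unit type
    | lam : Ty → Expr → Expr              -- λx:A. e  (binds a Δ value var)
    | app : Expr → Expr → Expr
    | box : Theory → Comp → Expr          -- box Ψ. c (resets Γ to Ψ)
    | letbox : Expr → Expr → Expr         -- let box u = e₁ in e₂ (binds a Δ modal var)
  /-- Computations. -/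
  inductive Comp : Type where
    | ret : Expr → Comp
    | bind : Stmt → Comp → Comp           -- x ← s; c (binds a Δ value var)
    | letbox : Expr → Comp → Comp         -- let box u = e in c (binds a Δ modal var)
  /-- Statements. -/
  inductive Stmt : Type where
    | op : ℕ → Expr → Stmt                -- op e (Γ-index)
    | cont : ℕ → Expr → Expr → Stmt       -- k(e₁, e₂) (Γ-index)
    | handle : ℕ → HSeq → Handler → Expr → Stmt  -- u with [Θ] h @ e (Δ-index for u)
  /-- Handlers. -/
  inductive Handler : Type where
    | retc : Comp → Handler               -- (return x @ z ↦ c): c binds x (idx1), z (idx0)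
    | opc : Handler → Comp → Handler      -- h, (op(x,k) @ z ↦ c): c binds x(Δ1), z(Δ0), k(Γ0)
  /-- Handling sequences. -/
  inductive HSeq : Type where
    | nil : HSeq
    | cons : HSeq → Handler → Expr → Comp → HSeq  -- Θ, (h @ e to x. c): c binds x (Δ0)
end

/-- Lift a renaming under one binder. -/
def liftR (ρ : ℕ → ℕ) : ℕ → ℕ
  | 0 => 0
  | n + 1 => ρ n + 1

mutual
  /-- Renaming of Δ-indices. -/
  def renDE (ρ : ℕ → ℕ) : Expr → Expr
    | .var n => .var (ρ n)
    | .unit => .unit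
    | .lam A e => .lam A (renDE (liftR ρ) e)
    | .app e1 e2 => .app (renDE ρ e1) (renDE ρ e2)
    | .box Ψ c => .box Ψ (renDC ρ c)
    | .letbox e1 e2 => .letbox (renDE ρ e1) (renDE (liftR ρ) e2)
  def renDC (ρ : ℕ → ℕ) : Comp → Comp
    | .ret e => .ret (renDE ρ e)
    | .bind s c => .bind (renDS ρ s) (renDC (liftR ρ) c)
    | .letbox e c => .letbox (renDE ρ e) (renDC (liftR ρ) c)
  def renDS (ρ : ℕ → ℕ) : Stmt → Stmt
    | .op i e => .op i (renDE ρ e)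
    | .cont k e1 e2 => .cont k (renDE ρ e1) (renDE ρ e2)
    | .handle u Θ h e => .handle (ρ u) (renDT ρ Θ) (renDH ρ h) (renDE ρ e)
  def renDH (ρ : ℕ → ℕ) : Handler → Handler
    | .retc c => .retc (renDC (liftR (liftR ρ)) c)
    | .opc h c => .opc (renDH ρ h) (renDC (liftR (liftR ρ)) c)
  def renDT (ρ : ℕ → ℕ) : HSeq → HSeq
    | .nil => .nil
    | .cons Θ h e c => .cons (renDT ρ Θ) (renDH ρ h) (renDE ρ e) (renDC (liftR ρ) c)
end

mutual
  /-- Renaming of Γ-indices (expressions contain no free Γ-variables). -/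
  def renGC (ρ : ℕ → ℕ) : Comp → Comp
    | .ret e => .ret e
    | .bind s c => .bind (renGS ρ s) (renGC ρ c)
    | .letbox e c => .letbox e (renGC ρ c)
  def renGS (ρ : ℕ → ℕ) : Stmt → Stmt
    | .op i e => .op (ρ i) e
    | .cont k e1 e2 => .cont (ρ k) e1 e2
    | .handle u Θ h e => .handle u Θ (renGH ρ h) e
  def renGH (ρ : ℕ → ℕ) : Handler → Handler
    | .retc c => .retc (renGC ρ c)
    | .opc h c => .opc (renGH ρ h) (renGC (liftR ρ) c)
end

/-- Index adjustment for removing the Δ-variable at depth `d`. -/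
def sIdx (d m : ℕ) : ℕ := if m < d then m else m - 1

/-- Variable case of expression substitution at depth `d`. -/
def sVar (e : Expr) (d m : ℕ) : Expr :=
  if m < d then .var m else if m = d then renDE (· + d) e else .var (m - 1)

mutual
  /-- Expression substitution `[e/x]·`: substitute `e` for the Δ value variable at depth `d`. -/
  def esbE (e : Expr) : ℕ → Expr → Expr
    | d, .var m => sVar e d m
    | _, .unit => .unit
    | d, .lam A e' => .lam A (esbE e (d+1) e')
    | d, .app e1 e2 => .app (esbE e d e1) (esbE e d e2)
    | d, .box Ψ c => .box Ψ (esbC e d c)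
    | d, .letbox e1 e2 => .letbox (esbE e d e1) (esbE e (d+1) e2)
  def esbC (e : Expr) : ℕ → Comp → Comp
    | d, .ret e' => .ret (esbE e d e')
    | d, .bind s c => .bind (esbS e d s) (esbC e (d+1) c)
    | d, .letbox e' c => .letbox (esbE e d e') (esbC e (d+1) c)
  def esbS (e : Expr) : ℕ → Stmt → Stmt
    | d, .op i e' => .op i (esbE e d e')
    | d, .cont k e1 e2 => .cont k (esbE e d e1) (esbE e d e2)
    | d, .handle u Θ h e' => .handle (sIdx d u) (esbT e d Θ) (esbH e d h) (esbE e d e')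
  def esbH (e : Expr) : ℕ → Handler → Handler
    | d, .retc c => .retc (esbC e (d+2) c)
    | d, .opc h c => .opc (esbH e d h) (esbC e (d+2) c)
  def esbT (e : Expr) : ℕ → HSeq → HSeq
    | _, .nil => .nil
    | d, .cons Θ h e' c => .cons (esbT e d Θ) (esbH e d h) (esbE e d e') (esbC e (d+1) c)
end

/-- Monadic substitution `⟨c/x⟩c′` (Figure 5a): sequentially compose `c` before `c′` via `x`. -/
def monSub : Comp → Comp → Comp
  | .ret e, c' => esbC e 0 c'
  | .bind s c, c' => .bind s (monSub c (renDC (liftR Nat.succ) c'))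
  | .letbox e c, c' => .letbox e (monSub c (renDC (liftR Nat.succ) c'))

/-- Index adjustment for removing the Γ-variable at position `g`. -/
def adjG (g m : ℕ) : ℕ := if m < g then m else m - 1

mutual
  /-- Continuation substitution `⟨⟨(x,y). body / k⟩⟩ ·` (Figure 5b).
  `body` is typed in `Δ, x, y; Γ` (so `y` is Δ-index 0 and `x` is Δ-index 1);
  `g` is the current Γ-index of `k`; `dsh`/`gsh` record the crossed Δ and Γ binders. -/
  def ksubC (body : Comp) : ℕ → ℕ → ℕ → Comp → Comp
    | _, _, _, .ret e => .ret e
    | g, dsh, gsh, .bind (.cont k e1 e2) c' =>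
        if k = g then
          monSub
            (esbC e2 0 (esbC e1 1
              (renDC (liftR (liftR (· + dsh))) (renGC (· + gsh) body))))
            (ksubC body g (dsh+1) gsh c')
        else
          .bind (.cont (adjG g k) e1 e2) (ksubC body g (dsh+1) gsh c')
    | g, dsh, gsh, .bind (.op i e) c' =>
        .bind (.op (adjG g i) e) (ksubC body g (dsh+1) gsh c')
    | g, dsh, gsh, .bind (.handle u Θ h e) c' =>
        .bind (.handle u Θ (ksubH body g dsh gsh h) e) (ksubC body g (dsh+1) gsh c')
    | g, dsh, gsh, .letbox e c' => .letbox e (ksubC body g (dsh+1) gsh c')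
  def ksubH (body : Comp) : ℕ → ℕ → ℕ → Handler → Handler
    | g, dsh, gsh, .retc c => .retc (ksubC body g (dsh+2) gsh c)
    | g, dsh, gsh, .opc h c =>
        .opc (ksubH body g dsh gsh h) (ksubC body (g+1) (dsh+2) (gsh+1) c)
end

/-- The return clause of a handler. -/
def hret : Handler → Comp
  | .retc c => c
  | .opc h _ => hret h

/-- The clause of a handler for the operation with Γ-index `i` (0 = last-added operation). -/
def hop : Handler → ℕ → Comp
  | .retc c, _ => c
  | .opc _ c, 0 => c
  | .opc h _, i + 1 => hop h i

/-- Handling `⦃·⦄ h @ e` (Figure 5c), carrying a pending Δ-renaming `ρ` of the handled term. -/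
def hndl : Comp → (ℕ → ℕ) → Handler → Expr → Comp
  | .ret e', ρ, h, _e =>
      -- [ρ e′ / x] [e / z] (return clause)
      esbC (renDE ρ e') 0 (esbC _e 0 (hret h))
  | .bind (.op i e') c', ρ, h, e =>
      -- ⟨⟨(y, z′). ⦃c′⦄ h @ z′ / k⟩⟩ ([ρ e′ / x′] [e / z] c_op)
      ksubC (hndl c' (fun n => liftR ρ n + 1) (renDH (· + 2) h) (.var 0)) 0 0 0
        (esbC (renDE ρ e') 0 (esbC e 0 (hop h i)))
  | .bind (.cont k e1 e2) c', ρ, h, e =>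
      -- unreachable on well-typed input (the handled term lives in a theory, no continuations)
      .bind (renDS ρ (.cont k e1 e2)) (hndl c' (liftR ρ) (renDH (· + 1) h) (renDE (· + 1) e))
  | .bind (.handle u Θ h' e') c', ρ, h, e =>
      .bind (.handle (ρ u)
          (.cons (renDT ρ Θ) (renDH ρ h') (renDE ρ e') (renDC (liftR ρ) c')) h e)
        (.ret (.var 0))
  | .letbox e' c', ρ, h, e =>
      .letbox (renDE ρ e') (hndl c' (liftR ρ) (renDH (· + 1) h) (renDE (· + 1) e))

/-- Handling sequencing `⦃·⦄ Θ` (Figure 5d). -/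
def hndlSeq : Comp → HSeq → Comp
  | c, .nil => c
  | c, .cons Θ h e c' => monSub (hndl (hndlSeq c Θ) id h e) c'

mutual
  /-- Modal substitution `[[Ψ. c / u]] ·` for the modal variable at Δ-depth `d` (Appendix A). -/
  def msubE (c : Comp) : ℕ → Expr → Expr
    | d, .var m => .var (sIdx d m)
    | _, .unit => .unit
    | d, .lam A e => .lam A (msubE c (d+1) e)
    | d, .app e1 e2 => .app (msubE c d e1) (msubE c d e2)
    | d, .box Ψ c' => .box Ψ (msubC c d c')
    | d, .letbox e1 e2 => .letbox (msubE c d e1) (msubE c (d+1) e2)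
  def msubC (c : Comp) : ℕ → Comp → Comp
    | d, .ret e => .ret (msubE c d e)
    | d, .bind (.handle u Θ h e) c' =>
        if u = d then
          -- guarded occurrence of u: ⟨ ⦃⦃c⦄Θ'⦄ h' @ e' / x′ ⟩ c″
          monSub
            (hndl (hndlSeq (renDC (· + d) c) (msubT c d Θ)) id (msubH c d h) (msubE c d e))
            (msubC c (d+1) c')
        else
          .bind (.handle (sIdx d u) (msubT c d Θ) (msubH c d h) (msubE c d e))
            (msubC c (d+1) c')
    | d, .bind (.op i e) c' => .bind (.op i (msubE c d e)) (msubC c (d+1) c')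
    | d, .bind (.cont k e1 e2) c' =>
        .bind (.cont k (msubE c d e1) (msubE c d e2)) (msubC c (d+1) c')
    | d, .letbox e c' => .letbox (msubE c d e) (msubC c (d+1) c')
  def msubS (c : Comp) : ℕ → Stmt → Stmt
    | d, .op i e => .op i (msubE c d e)
    | d, .cont k e1 e2 => .cont k (msubE c d e1) (msubE c d e2)
    | d, .handle u Θ h e => .handle (sIdx d u) (msubT c d Θ) (msubH c d h) (msubE c d e)
  def msubH (c : Comp) : ℕ → Handler → Handler
    | d, .retc c' => .retc (msubC c (d+2) c')
    | d, .opc h c' => .opc (msubH c d h) (msubC c (d+2) c')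
  def msubT (c : Comp) : ℕ → HSeq → HSeq
    | _, .nil => .nil
    | d, .cons Θ h e c' => .cons (msubT c d Θ) (msubH c d h) (msubE c d e) (msubC c (d+1) c')
end

/-- Clause of the identity handler for the operation with Γ-index `n` (relative to the full
theory): `opₙ(x, k) @ z ↦ y ← opₙ x; k(y, z)`. Inside the clause body the effect context is
extended by `k`, so the operation index becomes `n + 1`. -/
def idClause (n : ℕ) : Comp :=
  .bind (.op (n+1) (.var 1)) (.bind (.cont 0 (.var 0) (.var 1)) (.ret (.var 0)))

def idHandlerAux : ℕ → Theory → Handler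
  | _, [] => .retc (.ret (.var 1))     -- return x @ z ↦ ret x
  | n, _ :: Ψ => .opc (idHandlerAux (n+1) Ψ) (idClause n)

/-- The identity handler `id_Ψ` for a theory `Ψ`. -/
def idHandler (Ψ : Theory) : Handler := idHandlerAux 0 Ψ

mutual
  /-- Expression typing `Δ ⊢ e : A`. -/
  inductive ETy : DCtx → Expr → Ty → Prop where
    | var : Δ[x]? = some (.val A) → ETy Δ (.var x) A
    | unit : ETy Δ .unit .unit
    | lam : ETy (.val A :: Δ) e B → ETy Δ (.lam A e) (.arrow A B)
    | app : ETy Δ e1 (.arrow A B) → ETy Δ e2 A → ETy Δ (.app e1 e2) B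
    | box : CTy Δ (thCtx Ψ) c A → ETy Δ (.box Ψ c) (.box Ψ A)
    | letbox : ETy Δ e1 (.box Ψ A) → ETy (.modal A Ψ :: Δ) e2 B →
        ETy Δ (.letbox e1 e2) B
  /-- Computation typing `Δ; Γ ⊢ c ÷ A`. -/
  inductive CTy : DCtx → GCtx → Comp → Ty → Prop where
    | ret : ETy Δ e A → CTy Δ Γ (.ret e) A
    | bind : STy Δ Γ s A → CTy (.val A :: Δ) Γ c B → CTy Δ Γ (.bind s c) B
    | letbox : ETy Δ e (.box Ψ A) → CTy (.modal A Ψ :: Δ) Γ c B →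
        CTy Δ Γ (.letbox e c) B
  /-- Statement typing `Δ; Γ ⊢ s ÷ₛ A`. -/
  inductive STy : DCtx → GCtx → Stmt → Ty → Prop where
    | op : Γ[i]? = some (.op A B) → ETy Δ e A → STy Δ Γ (.op i e) B
    | cont : Γ[k]? = some (.cont A S B) → ETy Δ e1 A → ETy Δ e2 S →
        STy Δ Γ (.cont k e1 e2) B
    | mvar : Δ[u]? = some (.modal A Ψ) → TTy Δ Ψ' Θ A Ψ B →
        HTy Δ Γ h B Ψ' S C → ETy Δ e S → STy Δ Γ (.handle u Θ h e) C
  /-- Handler typing `Δ; Γ ⊢ h ÷ A[Ψ] ⇒@S B`. -/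
  inductive HTy : DCtx → GCtx → Handler → Ty → Theory → Ty → Ty → Prop where
    | retc : CTy (.val S :: .val A :: Δ) Γ c B → HTy Δ Γ (.retc c) A [] S B
    | opc : HTy Δ Γ h C Ψ S C' →
        CTy (.val S :: .val A :: Δ) (.cont B S C' :: Γ) c C' →
        HTy Δ Γ (.opc h c) C ((A, B) :: Ψ) S C'
  /-- Handling-sequence typing `Δ; Ψ ⊢ Θ ÷ A[Ψ'] ⇒ B`. -/
  inductive TTy : DCtx → Theory → HSeq → Ty → Theory → Ty → Prop where
    | nil : Ψ' <+: Ψ → TTy Δ Ψ .nil A Ψ' A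
    | cons : TTy Δ Ψ' Θ A Ψ'' B → HTy Δ (thCtx Ψ) h B Ψ' S C → ETy Δ e S →
        CTy (.val C :: Δ) (thCtx Ψ) c D → TTy Δ Ψ (.cons Θ h e c) A Ψ'' D
end

/-- Expression values: λ-abstractions, boxes, and base values such as (). -/
inductive EVal : Expr → Prop where
  | unit : EVal .unit
  | lam : EVal (.lam A e)
  | box : EVal (.box Ψ c)

/-- Call-by-value small-step reduction on expressions (Figure 6). -/
inductive EStep : Expr → Expr → Prop where
  | app1 : EStep e1 e1' → EStep (.app e1 e2) (.app e1' e2)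
  | app2 : EVal v → EStep e2 e2' → EStep (.app v e2) (.app v e2')
  | beta : EVal v → EStep (.app (.lam A e) v) (esbE v 0 e)
  | letbox1 : EStep e1 e1' → EStep (.letbox e1 e2) (.letbox e1' e2)
  | letbox : EStep (.letbox (.box Ψ c) e2) (msubE c 0 e2)

/-- Call-by-value small-step reduction on computations (Figure 6). -/
inductive CStep : Comp → Comp → Prop where
  | ret : EStep e e' → CStep (.ret e) (.ret e')
  | letbox1 : EStep e e' → CStep (.letbox e c) (.letbox e' c)
  | letbox : CStep (.letbox (.box Ψ c1) c2) (msubC c1 0 c2)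


/-! ### Auxiliary lemmas for monadic substitution -/

def RenOk (ρ : ℕ → ℕ) (Δ Δ' : DCtx) : Prop :=
  ∀ n h, Δ[n]? = some h → Δ'[ρ n]? = some h

theorem RenOk.lift {ρ : ℕ → ℕ} {Δ Δ' : DCtx} (H : RenOk ρ Δ Δ') (h : DHyp) :
    RenOk (liftR ρ) (h :: Δ) (h :: Δ') := by
  intro n hh
  cases n with
  | zero => simpa [liftR] using hh
  | succ n =>
      simp only [liftR, List.getElem?_cons_succ]
      intro hx
      exact H n hh hx

theorem renOk_succ {Δ : DCtx} (h : DHyp) : RenOk Nat.succ Δ (h :: Δ) := by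
  intro n hh hx; simpa using hx

mutual
theorem renE_ty : ∀ (e : Expr) (ρ : ℕ → ℕ) (Δ Δ' : DCtx) (A : Ty),
    RenOk ρ Δ Δ' → ETy Δ e A → ETy Δ' (renDE ρ e) A
  | .var n, ρ, Δ, Δ', A, H, ht => by
      cases ht with | var hx => exact .var (H _ _ hx)
  | .unit, ρ, Δ, Δ', A, H, ht => by
      cases ht; exact .unit
  | .lam A0 e, ρ, Δ, Δ', A, H, ht => by
      cases ht with | lam h => exact .lam (renE_ty e _ _ _ _ (H.lift _) h)
  | .app e1 e2, ρ, Δ, Δ', A, H, ht => by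
      cases ht with | app h1 h2 =>
        exact .app (renE_ty e1 _ _ _ _ H h1) (renE_ty e2 _ _ _ _ H h2)
  | .box Ψ c, ρ, Δ, Δ', A, H, ht => by
      cases ht with | box h => exact .box (renC_ty c _ _ _ _ _ H h)
  | .letbox e1 e2, ρ, Δ, Δ', A, H, ht => by
      cases ht with | letbox h1 h2 =>
        exact .letbox (renE_ty e1 _ _ _ _ H h1) (renE_ty e2 _ _ _ _ (H.lift _) h2)

theorem renC_ty : ∀ (c : Comp) (ρ : ℕ → ℕ) (Δ Δ' : DCtx) (Γ : GCtx) (A : Ty),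
    RenOk ρ Δ Δ' → CTy Δ Γ c A → CTy Δ' Γ (renDC ρ c) A
  | .ret e, ρ, Δ, Δ', Γ, A, H, ht => by
      cases ht with | ret h => exact .ret (renE_ty e _ _ _ _ H h)
  | .bind s c, ρ, Δ, Δ', Γ, A, H, ht => by
      cases ht with | bind hs hc =>
        exact .bind (renS_ty s _ _ _ _ _ H hs) (renC_ty c _ _ _ _ _ (H.lift _) hc)
  | .letbox e c, ρ, Δ, Δ', Γ, A, H, ht => by
      cases ht with | letbox he hc =>
        exact .letbox (renE_ty e _ _ _ _ H he) (renC_ty c _ _ _ _ _ (H.lift _) hc)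

theorem renS_ty : ∀ (s : Stmt) (ρ : ℕ → ℕ) (Δ Δ' : DCtx) (Γ : GCtx) (A : Ty),
    RenOk ρ Δ Δ' → STy Δ Γ s A → STy Δ' Γ (renDS ρ s) A
  | .op i e, ρ, Δ, Δ', Γ, A, H, ht => by
      cases ht with | op hx he => exact .op hx (renE_ty e _ _ _ _ H he)
  | .cont k e1 e2, ρ, Δ, Δ', Γ, A, H, ht => by
      cases ht with | cont hx h1 h2 =>
        exact .cont hx (renE_ty e1 _ _ _ _ H h1) (renE_ty e2 _ _ _ _ H h2)
  | .handle u Θ h e, ρ, Δ, Δ', Γ, A, H, ht => by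
      cases ht with | mvar hu hΘ hH he =>
        exact .mvar (H _ _ hu) (renT_ty Θ _ _ _ _ _ _ _ H hΘ)
          (renH_ty h _ _ _ _ _ _ _ _ H hH) (renE_ty e _ _ _ _ H he)

theorem renH_ty : ∀ (h : Handler) (ρ : ℕ → ℕ) (Δ Δ' : DCtx) (Γ : GCtx)
    (A : Ty) (Ψ : Theory) (S B : Ty),
    RenOk ρ Δ Δ' → HTy Δ Γ h A Ψ S B → HTy Δ' Γ (renDH ρ h) A Ψ S B
  | .retc c, ρ, Δ, Δ', Γ, A, Ψ, S, B, H, ht => by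
      cases ht with | retc hc =>
        exact .retc (renC_ty c _ _ _ _ _ ((H.lift _).lift _) hc)
  | .opc h c, ρ, Δ, Δ', Γ, A, Ψ, S, B, H, ht => by
      cases ht with | opc hh hc =>
        exact .opc (renH_ty h _ _ _ _ _ _ _ _ H hh)
          (renC_ty c _ _ _ _ _ ((H.lift _).lift _) hc)

theorem renT_ty : ∀ (Θ : HSeq) (ρ : ℕ → ℕ) (Δ Δ' : DCtx) (Ψ : Theory)
    (A : Ty) (Ψ' : Theory) (B : Ty),
    RenOk ρ Δ Δ' → TTy Δ Ψ Θ A Ψ' B → TTy Δ' Ψ (renDT ρ Θ) A Ψ' B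
  | .nil, ρ, Δ, Δ', Ψ, A, Ψ', B, H, ht => by
      cases ht with | nil hp => exact .nil hp
  | .cons Θ h e c, ρ, Δ, Δ', Ψ, A, Ψ', B, H, ht => by
      cases ht with | cons hΘ hh he hc =>
        exact .cons (renT_ty Θ _ _ _ _ _ _ _ H hΘ)
          (renH_ty h _ _ _ _ _ _ _ _ H hh) (renE_ty e _ _ _ _ H he)
          (renC_ty c _ _ _ _ _ (H.lift _) hc)
end

theorem lookup_weaken {Δ₁ Δ : DCtx} {n : ℕ} {h : DHyp} (hx : Δ[n]? = some h) :
    (Δ₁ ++ Δ)[n + Δ₁.length]? = some h := by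
  rw [List.getElem?_append_right (by omega)]
  simpa using hx

theorem renOk_add (Δ₁ Δ : DCtx) : RenOk (· + Δ₁.length) Δ (Δ₁ ++ Δ) := by
  intro n h hx; exact lookup_weaken hx

theorem lookup_remove {Δ₁ Δ : DCtx} {X h : DHyp} {u : ℕ}
    (hu : (Δ₁ ++ X :: Δ)[u]? = some h) (hne : u ≠ Δ₁.length) :
    (Δ₁ ++ Δ)[sIdx Δ₁.length u]? = some h := by
  rcases lt_or_ge u Δ₁.length with hlt | hge
  · rw [List.getElem?_append_left hlt] at hu
    rw [sIdx, if_pos hlt, List.getElem?_append_left hlt]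
    exact hu
  · have hgt : Δ₁.length < u := lt_of_le_of_ne hge (Ne.symm hne)
    rw [List.getElem?_append_right hge] at hu
    obtain ⟨k, rfl⟩ : ∃ k, u = Δ₁.length + k + 1 := ⟨u - Δ₁.length - 1, by omega⟩
    rw [sIdx, if_neg (by omega), List.getElem?_append_right (by omega)]
    simp only [show Δ₁.length + k + 1 - Δ₁.length = k + 1 from by omega,
      List.getElem?_cons_succ] at hu
    simpa [show Δ₁.length + k + 1 - 1 - Δ₁.length = k from by omega] using hu

theorem lookup_mid (Δ₁ : DCtx) {Δ : DCtx} (X : DHyp) :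
    (Δ₁ ++ X :: Δ)[Δ₁.length]? = some X := by
  rw [List.getElem?_append_right (le_refl _)]
  simp

mutual
theorem esbE_ty : ∀ (e' : Expr) (Δ₁ : DCtx) (Δ : DCtx) (A B : Ty) (e : Expr),
    ETy Δ e A → ETy (Δ₁ ++ .val A :: Δ) e' B →
    ETy (Δ₁ ++ Δ) (esbE e Δ₁.length e') B
  | .var m, Δ₁, Δ, A, B, e, he, ht => by
      cases ht with | var hx =>
      show ETy _ (sVar e Δ₁.length m) B
      rw [sVar]
      rcases lt_or_ge m Δ₁.length with hlt | hge
      · rw [if_pos hlt]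
        rw [List.getElem?_append_left hlt] at hx
        exact .var (by rw [List.getElem?_append_left hlt]; exact hx)
      · rw [if_neg (by omega)]
        by_cases heq : m = Δ₁.length
        · subst heq
          rw [if_pos rfl]
          rw [lookup_mid] at hx
          cases hx
          exact renE_ty e _ _ _ _ (renOk_add Δ₁ Δ) he
        · rw [if_neg heq]
          have := lookup_remove hx heq
          rw [sIdx, if_neg (by omega)] at this
          exact .var this
  | .unit, Δ₁, Δ, A, B, e, he, ht => by cases ht; exact .unit
  | .lam A0 e', Δ₁, Δ, A, B, e, he, ht => by
      cases ht with | lam h =>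
        exact .lam (esbE_ty e' (.val A0 :: Δ₁) Δ A _ e he h)
  | .app e1 e2, Δ₁, Δ, A, B, e, he, ht => by
      cases ht with | app h1 h2 =>
        exact .app (esbE_ty e1 Δ₁ Δ A _ e he h1) (esbE_ty e2 Δ₁ Δ A _ e he h2)
  | .box Ψ c, Δ₁, Δ, A, B, e, he, ht => by
      cases ht with | box h => exact .box (esbC_ty c Δ₁ Δ A _ _ e he h)
  | .letbox e1 e2, Δ₁, Δ, A, B, e, he, ht => by
      cases ht with | letbox h1 h2 =>
        exact .letbox (esbE_ty e1 Δ₁ Δ A _ e he h1)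
          (esbE_ty e2 (.modal _ _ :: Δ₁) Δ A _ e he h2)

theorem esbC_ty : ∀ (c' : Comp) (Δ₁ : DCtx) (Δ : DCtx) (A : Ty) (Γ : GCtx)
    (B : Ty) (e : Expr),
    ETy Δ e A → CTy (Δ₁ ++ .val A :: Δ) Γ c' B →
    CTy (Δ₁ ++ Δ) Γ (esbC e Δ₁.length c') B
  | .ret e', Δ₁, Δ, A, Γ, B, e, he, ht => by
      cases ht with | ret h => exact .ret (esbE_ty e' Δ₁ Δ A _ e he h)
  | .bind s c, Δ₁, Δ, A, Γ, B, e, he, ht => by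
      cases ht with | bind hs hc =>
        exact .bind (esbS_ty s Δ₁ Δ A _ _ e he hs)
          (esbC_ty c (.val _ :: Δ₁) Δ A _ _ e he hc)
  | .letbox e' c, Δ₁, Δ, A, Γ, B, e, he, ht => by
      cases ht with | letbox h1 hc =>
        exact .letbox (esbE_ty e' Δ₁ Δ A _ e he h1)
          (esbC_ty c (.modal _ _ :: Δ₁) Δ A _ _ e he hc)

theorem esbS_ty : ∀ (s : Stmt) (Δ₁ : DCtx) (Δ : DCtx) (A : Ty) (Γ : GCtx)
    (B : Ty) (e : Expr),
    ETy Δ e A → STy (Δ₁ ++ .val A :: Δ) Γ s B →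
    STy (Δ₁ ++ Δ) Γ (esbS e Δ₁.length s) B
  | .op i e', Δ₁, Δ, A, Γ, B, e, he, ht => by
      cases ht with | op hx h => exact .op hx (esbE_ty e' Δ₁ Δ A _ e he h)
  | .cont k e1 e2, Δ₁, Δ, A, Γ, B, e, he, ht => by
      cases ht with | cont hx h1 h2 =>
        exact .cont hx (esbE_ty e1 Δ₁ Δ A _ e he h1) (esbE_ty e2 Δ₁ Δ A _ e he h2)
  | .handle u Θ h e', Δ₁, Δ, A, Γ, B, e, he, ht => by
      cases ht with | mvar hu hΘ hH he' =>
        have hne : u ≠ Δ₁.length := by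
          intro hcon; subst hcon; rw [lookup_mid] at hu; cases hu
        exact .mvar (lookup_remove hu hne) (esbT_ty Θ Δ₁ Δ A _ _ _ _ e he hΘ)
          (esbH_ty h Δ₁ Δ A _ _ _ _ _ e he hH) (esbE_ty e' Δ₁ Δ A _ e he he')

theorem esbH_ty : ∀ (h : Handler) (Δ₁ : DCtx) (Δ : DCtx) (A : Ty) (Γ : GCtx)
    (C : Ty) (Ψ : Theory) (S B : Ty) (e : Expr),
    ETy Δ e A → HTy (Δ₁ ++ .val A :: Δ) Γ h C Ψ S B →
    HTy (Δ₁ ++ Δ) Γ (esbH e Δ₁.length h) C Ψ S B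
  | .retc c, Δ₁, Δ, A, Γ, C, Ψ, S, B, e, he, ht => by
      cases ht with | retc hc =>
        exact .retc (esbC_ty c (.val S :: .val C :: Δ₁) Δ A _ _ e he hc)
  | .opc h c, Δ₁, Δ, A, Γ, C, Ψ, S, B, e, he, ht => by
      cases ht with | opc hh hc =>
        exact .opc (esbH_ty h Δ₁ Δ A _ _ _ _ _ e he hh)
          (esbC_ty c (.val S :: .val _ :: Δ₁) Δ A _ _ e he hc)

theorem esbT_ty : ∀ (Θ : HSeq) (Δ₁ : DCtx) (Δ : DCtx) (A : Ty) (Ψ : Theory)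
    (C : Ty) (Ψ' : Theory) (B : Ty) (e : Expr),
    ETy Δ e A → TTy (Δ₁ ++ .val A :: Δ) Ψ Θ C Ψ' B →
    TTy (Δ₁ ++ Δ) Ψ (esbT e Δ₁.length Θ) C Ψ' B
  | .nil, Δ₁, Δ, A, Ψ, C, Ψ', B, e, he, ht => by
      cases ht with | nil hp => exact .nil hp
  | .cons Θ h e' c, Δ₁, Δ, A, Ψ, C, Ψ', B, e, he, ht => by
      cases ht with | cons hΘ hh he' hc =>
        exact .cons (esbT_ty Θ Δ₁ Δ A _ _ _ _ e he hΘ)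
          (esbH_ty h Δ₁ Δ A _ _ _ _ _ e he hh) (esbE_ty _ Δ₁ Δ A _ e he he')
          (esbC_ty c (.val _ :: Δ₁) Δ A _ _ e he hc)
end

theorem monSub_ty : ∀ (c : Comp) (Δ : DCtx) (Γ : GCtx) (c' : Comp) (A B : Ty),
    CTy Δ Γ c A → CTy (.val A :: Δ) Γ c' B → CTy Δ Γ (monSub c c') B
  | .ret e, Δ, Γ, c', A, B, hc, hc' => by
      cases hc with | ret he => exact esbC_ty c' [] Δ A Γ B e he hc'
  | .bind s c, Δ, Γ, c', A, B, hc, hc' => by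
      cases hc with | bind hs hcc =>
        exact .bind hs (monSub_ty c _ _ _ _ _ hcc
          (renC_ty c' _ _ _ _ _ ((renOk_succ _).lift _) hc'))
  | .letbox e c, Δ, Γ, c', A, B, hc, hc' => by
      cases hc with | letbox he hcc =>
        exact .letbox he (monSub_ty c _ _ _ _ _ hcc
          (renC_ty c' _ _ _ _ _ ((renOk_succ _).lift _) hc'))

/-- Monadic substitution principle, Lemma 3:
if `Δ; Γ ⊢ c ÷ A` and `Δ, x : A; Γ ⊢ c′ ÷ B`, then `Δ; Γ ⊢ ⟨c/x⟩c′ ÷ B`. -/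
theorem ecmtt_monadic_subst :
    ∀ (Δ : DCtx) (Γ : GCtx) (c c' : Comp) (A B : Ty),
      CTy Δ Γ c A → CTy (.val A :: Δ) Γ c' B → CTy Δ Γ (monSub c c') B :=
  fun Δ Γ c c' A B hc hc' => monSub_ty c Δ Γ c' A B hc hc'
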